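/- Given a lax V-monoidal functor (R, ρ^R) : A → B between rigid tensored V-monoidal categories, the family r_v := mate(η_v^{F_A} ≫ R_{1_A → F_A(v)}) : F_B(v) → R(F_A(v)) is a natural transformation F_B ⇒ R ∘ F_A: for every f : u → v in V, F_B(f) ≫ r_v = r_u ≫ R(F_A(f)). -/

import Mathlib

open CategoryTheory MonoidalCategory

universe w w' v u

variable (V : Type u) [Category.{v} V] [MonoidalCategory V] [BraidedCategory V]

/-- A (strict) monoidal structure on a `V`-enriched category: the data and axioms of a
`V`-monoidal category over the braided monoidal category `V`. -/
structure VMonStruct (C : Type w) [EnrichedCategory V C] where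
  tUnit : C
  tObj : C → C → C
  tHom : ∀ a b c d : C, ((a ⟶[V] c) ⊗ (b ⟶[V] d)) ⟶ ((tObj a b) ⟶[V] (tObj c d))
  unit_tensor : ∀ a, tObj tUnit a = a
  tensor_unit : ∀ a, tObj a tUnit = a
  tensor_assoc : ∀ a b c, tObj (tObj a b) c = tObj a (tObj b c)
  left_unitality : ∀ a b : C,
    (λ_ (a ⟶[V] b)).inv ≫ (eId V tUnit ⊗ₘ 𝟙 (a ⟶[V] b)) ≫ tHom tUnit a tUnit b =
      eqToHom (by rw [unit_tensor, unit_tensor])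
  right_unitality : ∀ a b : C,
    (ρ_ (a ⟶[V] b)).inv ≫ (𝟙 (a ⟶[V] b) ⊗ₘ eId V tUnit) ≫ tHom a tUnit b tUnit =
      eqToHom (by rw [tensor_unit, tensor_unit])
  tHom_assoc : ∀ a b c d e f : C,
    (tHom a b d e ⊗ₘ 𝟙 (c ⟶[V] f)) ≫ tHom (tObj a b) c (tObj d e) f =
      (α_ (a ⟶[V] d) (b ⟶[V] e) (c ⟶[V] f)).hom ≫
        ((a ⟶[V] d) ◁ tHom b c e f) ≫ tHom a (tObj b c) d (tObj e f) ≫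
        eqToHom (by rw [tensor_assoc a b c, tensor_assoc d e f])
  braided_interchange : ∀ a b c d e f : C,
    (tHom a d b e ⊗ₘ tHom b e c f) ≫ eComp V (tObj a d) (tObj b e) (tObj c f) =
      (α_ (a ⟶[V] b) (d ⟶[V] e) ((b ⟶[V] c) ⊗ (e ⟶[V] f))).hom ≫
        ((a ⟶[V] b) ◁ (α_ (d ⟶[V] e) (b ⟶[V] c) (e ⟶[V] f)).inv) ≫
        ((a ⟶[V] b) ◁ ((β_ (d ⟶[V] e) (b ⟶[V] c)).hom ▷ (e ⟶[V] f))) ≫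
        ((a ⟶[V] b) ◁ (α_ (b ⟶[V] c) (d ⟶[V] e) (e ⟶[V] f)).hom) ≫
        (α_ (a ⟶[V] b) (b ⟶[V] c) ((d ⟶[V] e) ⊗ (e ⟶[V] f))).inv ≫
        (eComp V a b c ⊗ₘ eComp V d e f) ≫ tHom a d c f

variable {V}

section Underlying

variable {C : Type w} [EnrichedCategory V C]

/-- Composition of `𝟙_V`-graded morphisms in the underlying category. -/
def compU {a b c : C} (f : 𝟙_ V ⟶ (a ⟶[V] b)) (g : 𝟙_ V ⟶ (b ⟶[V] c)) :
    𝟙_ V ⟶ (a ⟶[V] c) :=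
  (λ_ (𝟙_ V)).inv ≫ (f ⊗ₘ g) ≫ eComp V a b c

/-- Identity `𝟙_V`-graded morphism. -/
def idU (a : C) : 𝟙_ V ⟶ (a ⟶[V] a) := eId V a

/-- The `𝟙_V`-graded morphism induced by an equality of objects. -/
def eqU {a b : C} (h : a = b) : 𝟙_ V ⟶ (a ⟶[V] b) := by
  subst h; exact idU a

/-- Tensor product of `𝟙_V`-graded morphisms in the underlying category. -/
def tU (M : VMonStruct V C) {a b c d : C}
    (f : 𝟙_ V ⟶ (a ⟶[V] c)) (g : 𝟙_ V ⟶ (b ⟶[V] d)) :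
    𝟙_ V ⟶ (M.tObj a b ⟶[V] M.tObj c d) :=
  (λ_ (𝟙_ V)).inv ≫ (f ⊗ₘ g) ≫ M.tHom a b c d

/-- The free module functor data: a left adjoint `F` of `x ↦ C(1_C → x)` together with the
main adjunction `C^V(a ⊗ F(v) → b) ≅ V(v → C(a → b))`. -/
structure FreeModule (M : VMonStruct V C) where
  F : V → C
  Fmap : ∀ {u v : V}, (u ⟶ v) → (𝟙_ V ⟶ (F u ⟶[V] F v))
  Fmap_id : ∀ v : V, Fmap (𝟙 v) = idU (F v)
  Fmap_comp : ∀ {u v w : V} (f : u ⟶ v) (g : v ⟶ w), Fmap (f ≫ g) = compU (Fmap f) (Fmap g)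
  adj : ∀ (v : V) (a b : C), (𝟙_ V ⟶ (M.tObj a (F v) ⟶[V] b)) ≃ (v ⟶ (a ⟶[V] b))
  adj_nat_right : ∀ (v : V) (a b b' : C) (x : 𝟙_ V ⟶ (M.tObj a (F v) ⟶[V] b))
      (g : 𝟙_ V ⟶ (b ⟶[V] b')),
    adj v a b' (compU x g) =
      adj v a b x ≫ (ρ_ (a ⟶[V] b)).inv ≫ ((a ⟶[V] b) ◁ g) ≫ eComp V a b b'
  adj_nat_left : ∀ {u v : V} (h : u ⟶ v) (a b : C)
      (x : 𝟙_ V ⟶ (M.tObj a (F v) ⟶[V] b)),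
    adj u a b (compU (tU M (idU a) (Fmap h)) x) = h ≫ adj v a b x

/-- The unit of the main adjunction. -/
def unitU {M : VMonStruct V C} (FM : FreeModule M) (v : V) :
    v ⟶ (M.tUnit ⟶[V] FM.F v) :=
  FM.adj v M.tUnit (FM.F v) (eqU (M.unit_tensor (FM.F v)))

/-- The counit of the main adjunction. -/
def counitU {M : VMonStruct V C} (FM : FreeModule M) (a b : C) :
    𝟙_ V ⟶ (M.tObj a (FM.F (a ⟶[V] b)) ⟶[V] b) :=
  (FM.adj (a ⟶[V] b) a b).symm (𝟙 (a ⟶[V] b))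

/-- The half-braiding `e_{a, F(v)}`, the mate of `(η_v ⊗ j_a) ≫ (−⊗−)`. -/
def hb {M : VMonStruct V C} (FM : FreeModule M) (a : C) (v : V) :
    𝟙_ V ⟶ (M.tObj a (FM.F v) ⟶[V] M.tObj (FM.F v) a) :=
  (FM.adj v a (M.tObj (FM.F v) a)).symm
    ((ρ_ v).inv ≫ (unitU FM v ⊗ₘ eId V a) ≫ M.tHom M.tUnit a (FM.F v) a ≫
      eqToHom (by rw [M.unit_tensor]))

end Underlying
section Functors

variable {C : Type w} {D : Type w'} [EnrichedCategory V C] [EnrichedCategory V D]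

/-- A strictly unital lax `V`-monoidal functor between `V`-monoidal categories. -/
structure VLaxMonFunctor (M : VMonStruct V C) (N : VMonStruct V D) where
  obj : C → D
  map : ∀ a b : C, (a ⟶[V] b) ⟶ (obj a ⟶[V] obj b)
  map_id : ∀ a : C, eId V a ≫ map a a = eId V (obj a)
  map_comp : ∀ a b c : C,
    eComp V a b c ≫ map a c = (map a b ⊗ₘ map b c) ≫ eComp V (obj a) (obj b) (obj c)
  unit_obj : obj M.tUnit = N.tUnit
  unit_id : eId V M.tUnit ≫ map M.tUnit M.tUnit = eId V N.tUnit ≫ eqToHom (by rw [unit_obj])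
  lax : ∀ a b : C, 𝟙_ V ⟶ (N.tObj (obj a) (obj b) ⟶[V] obj (M.tObj a b))
  lax_natural : ∀ a b c d : C,
    (λ_ ((a ⟶[V] c) ⊗ (b ⟶[V] d))).inv ≫
        (lax a b ⊗ₘ (M.tHom a b c d ≫ map (M.tObj a b) (M.tObj c d))) ≫
        eComp V (N.tObj (obj a) (obj b)) (obj (M.tObj a b)) (obj (M.tObj c d)) =
      (ρ_ ((a ⟶[V] c) ⊗ (b ⟶[V] d))).inv ≫
        (((map a c ⊗ₘ map b d) ≫ N.tHom (obj a) (obj b) (obj c) (obj d)) ⊗ₘ lax c d) ≫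
        eComp V (N.tObj (obj a) (obj b)) (N.tObj (obj c) (obj d)) (obj (M.tObj c d))
  lax_assoc : ∀ a b c : C,
    compU (tU N (idU (obj a)) (lax b c)) (lax a (M.tObj b c)) =
      compU (eqU (N.tensor_assoc (obj a) (obj b) (obj c)).symm)
        (compU (tU N (lax a b) (idU (obj c)))
          (compU (lax (M.tObj a b) c) (eqU (congrArg obj (M.tensor_assoc a b c)))))
  lax_unit_left : ∀ a : C,
    lax M.tUnit a = eqU (by rw [unit_obj, N.unit_tensor, M.unit_tensor])
  lax_unit_right : ∀ a : C,
    lax a M.tUnit = eqU (by rw [unit_obj, N.tensor_unit, M.tensor_unit])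

end Functors

/-- The action-coherence natural transformation `r : F_B ⇒ R ∘ F_A` associated to a strictly
unital lax `V`-monoidal functor `R`: `r_v` is the mate of `η_v^{F_A} ≫ R_{1_A → F_A(v)}`. -/
def rtrans {V : Type*} [Category V] [MonoidalCategory V] [BraidedCategory V]
    {C D : Type*} [EnrichedCategory V C] [EnrichedCategory V D]
    {M : VMonStruct V C} {N : VMonStruct V D}
    (R : VLaxMonFunctor M N) (FA : FreeModule M) (FB : FreeModule N) (v : V) :
    𝟙_ V ⟶ (FB.F v ⟶[V] R.obj (FA.F v)) :=
  compU (eqU (N.unit_tensor (FB.F v)).symm)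
    ((FB.adj v N.tUnit (R.obj (FA.F v))).symm
      (unitU FA v ≫ R.map M.tUnit (FA.F v) ≫ eqToHom (by rw [R.unit_obj])))

/-!
`r_v` is the mate of `η_v^{F_A} ≫ R_{1_A → F_A(v)}`, and mates are natural in both variables:
precomposing with `f : u ⟶ v` in `V` corresponds to precomposing with `F_B(f)`, and
postcomposing in `V` with `postU g` corresponds to postcomposing with `g` in `B`. Naturality
of `r` therefore reduces to naturality of `η^{F_A} ≫ R`, which follows from naturality of `η`
and the compatibility of `R` with enriched composition.
-/

section Underlying

variable {V : Type*} [Category V] [MonoidalCategory V] {C : Type*} [EnrichedCategory V C]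

open ForgetEnrichment in
lemma compU_eq_homTo {a b c : C} (f : 𝟙_ V ⟶ (a ⟶[V] b)) (g : 𝟙_ V ⟶ (b ⟶[V] c)) :
    compU f g = homTo V (homOf V f ≫ homOf V g) :=
  congrArg (homTo V) (homOf_comp V f g)

lemma compU_assoc {a b c d : C} (x : 𝟙_ V ⟶ (a ⟶[V] b)) (y : 𝟙_ V ⟶ (b ⟶[V] c))
    (z : 𝟙_ V ⟶ (c ⟶[V] d)) : compU (compU x y) z = compU x (compU y z) := by
  simp only [compU_eq_homTo, ForgetEnrichment.homOf_homTo, Category.assoc]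

lemma idU_compU {a b : C} (x : 𝟙_ V ⟶ (a ⟶[V] b)) : compU (idU a) x = x := by
  simp [compU_eq_homTo, idU]

lemma compU_idU {a b : C} (x : 𝟙_ V ⟶ (a ⟶[V] b)) : compU x (idU b) = x := by
  simp [compU_eq_homTo, idU]

lemma eqU_compU {a b c : C} (h : a = b) (x : 𝟙_ V ⟶ (b ⟶[V] c)) :
    compU (eqU h) x = x ≫ eqToHom (by rw [h]) := by
  subst h
  simp [eqU, idU_compU]

lemma compU_eqU {a b c : C} (x : 𝟙_ V ⟶ (a ⟶[V] b)) (h : b = c) :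
    compU x (eqU h) = x ≫ eqToHom (by rw [h]) := by
  subst h
  simp [eqU, compU_idU]

def postU {a b c : C} (g : 𝟙_ V ⟶ (b ⟶[V] c)) : (a ⟶[V] b) ⟶ (a ⟶[V] c) :=
  (ρ_ (a ⟶[V] b)).inv ≫ ((a ⟶[V] b) ◁ g) ≫ eComp V a b c

lemma postU_eqToHom {a a' : C} (h : a = a') {b c : C} (g : 𝟙_ V ⟶ (b ⟶[V] c)) :
    postU (a := a) g ≫ eqToHom (by rw [h]) = eqToHom (by rw [h]) ≫ postU (a := a') g := by
  subst h
  simp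

end Underlying

lemma rightUnitor_inv_whiskerLeft_tensorHom {V : Type*} [Category V] [MonoidalCategory V]
    {x y b c : V} (p : x ⟶ y) (g : 𝟙_ V ⟶ b) (q : b ⟶ c) :
    (ρ_ x).inv ≫ (x ◁ g) ≫ (p ⊗ₘ q) = p ≫ (ρ_ y).inv ≫ (y ◁ (g ≫ q)) := by
  rw [← id_tensorHom, tensorHom_comp_tensorHom, Category.id_comp,
    MonoidalCategory.tensorHom_def, rightUnitor_inv_naturality_assoc]

lemma VLaxMonFunctor.postU_comp_map {C D : Type*} [EnrichedCategory V C] [EnrichedCategory V D]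
    {M : VMonStruct V C} {N : VMonStruct V D} (R : VLaxMonFunctor M N) {a b c : C}
    (g : 𝟙_ V ⟶ (b ⟶[V] c)) :
    postU (a := a) g ≫ R.map a c = R.map a b ≫ postU (g ≫ R.map b c) := by
  simp only [postU, Category.assoc, R.map_comp,
    reassoc_of% rightUnitor_inv_whiskerLeft_tensorHom]

section Monoidal

variable {C : Type*} [EnrichedCategory V C] {M : VMonStruct V C}

lemma tU_idU_tUnit {a b : C} (g : 𝟙_ V ⟶ (a ⟶[V] b)) :
    tU M (idU M.tUnit) g = g ≫ eqToHom (by rw [M.unit_tensor a, M.unit_tensor b]) := by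
  have h : (λ_ (𝟙_ V)).inv ≫ (eId V M.tUnit ⊗ₘ g) =
      g ≫ (λ_ (a ⟶[V] b)).inv ≫ (eId V M.tUnit ⊗ₘ 𝟙 (a ⟶[V] b)) := by
    rw [MonoidalCategory.tensorHom_def', leftUnitor_inv_naturality_assoc, tensorHom_id]
  rw [tU, idU, reassoc_of% h, M.left_unitality]

lemma tU_idU_tUnit_compU_eqU {a b : C} (g : 𝟙_ V ⟶ (a ⟶[V] b)) :
    compU (tU M (idU M.tUnit) g) (eqU (M.unit_tensor b)) = compU (eqU (M.unit_tensor a)) g := by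
  rw [compU_eqU, eqU_compU, tU_idU_tUnit]
  simp

lemma compU_eqU_unit_tensor_symm {a b : C} (g : 𝟙_ V ⟶ (a ⟶[V] b)) :
    compU g (eqU (M.unit_tensor b).symm) =
      compU (eqU (M.unit_tensor a).symm) (tU M (idU M.tUnit) g) := by
  rw [compU_eqU, eqU_compU, tU_idU_tUnit]
  simp

namespace FreeModule

variable (FM : FreeModule M)

lemma adj_compU {v : V} {a b b' : C} (x : 𝟙_ V ⟶ (M.tObj a (FM.F v) ⟶[V] b))
    (g : 𝟙_ V ⟶ (b ⟶[V] b')) : FM.adj v a b' (compU x g) = FM.adj v a b x ≫ postU g :=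
  FM.adj_nat_right v a b b' x g

lemma adj_symm_comp_postU {v : V} {a b b' : C} (y : v ⟶ (a ⟶[V] b))
    (g : 𝟙_ V ⟶ (b ⟶[V] b')) :
    (FM.adj v a b').symm (y ≫ postU g) = compU ((FM.adj v a b).symm y) g := by
  rw [Equiv.symm_apply_eq, adj_compU, Equiv.apply_symm_apply]

lemma adj_symm_comp {u v : V} (h : u ⟶ v) {a b : C} (y : v ⟶ (a ⟶[V] b)) :
    (FM.adj u a b).symm (h ≫ y) = compU (tU M (idU a) (FM.Fmap h)) ((FM.adj v a b).symm y) := by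
  rw [Equiv.symm_apply_eq, FM.adj_nat_left, Equiv.apply_symm_apply]

lemma unitU_natural {u v : V} (f : u ⟶ v) :
    f ≫ unitU FM v = unitU FM u ≫ postU (FM.Fmap f) := by
  rw [unitU, unitU, ← FM.adj_nat_left, ← adj_compU, tU_idU_tUnit_compU_eqU]

end FreeModule

end Monoidal

section rtrans

variable {C D : Type*} [EnrichedCategory V C] [EnrichedCategory V D]
  {M : VMonStruct V C} {N : VMonStruct V D} (R : VLaxMonFunctor M N) (FA : FreeModule M)

/-- `η_v^{F_A} ≫ R_{1_A → F_A(v)}`, whose mate is `r_v`. -/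
def rtransMate (v : V) : v ⟶ (N.tUnit ⟶[V] R.obj (FA.F v)) :=
  unitU FA v ≫ R.map M.tUnit (FA.F v) ≫ eqToHom (by rw [R.unit_obj])

lemma rtrans_eq (FB : FreeModule N) (v : V) :
    rtrans R FA FB v = compU (eqU (N.unit_tensor (FB.F v)).symm)
      ((FB.adj v N.tUnit (R.obj (FA.F v))).symm (rtransMate R FA v)) :=
  rfl

lemma rtransMate_natural {u v : V} (f : u ⟶ v) :
    f ≫ rtransMate R FA v =
      rtransMate R FA u ≫ postU (FA.Fmap f ≫ R.map (FA.F u) (FA.F v)) := by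
  rw [rtransMate, rtransMate, reassoc_of% (FA.unitU_natural f),
    reassoc_of% (R.postU_comp_map (FA.Fmap f)),
    postU_eqToHom R.unit_obj, Category.assoc, Category.assoc]

end rtrans

/-- Given a strictly unital lax `V`-monoidal functor `(R, ρ^R) : A → B`
between rigid tensored `V`-monoidal categories, the family
`r_v := mate(η_v^{F_A} ≫ R_{1_A → F_A(v)}) : F_B(v) ⟶ R(F_A(v))` is a natural transformation
`F_B ⇒ R ∘ F_A`: for every `f : u ⟶ v` in `V`, `F_B(f) ≫ r_v = r_u ≫ R(F_A(f))`. -/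
theorem rtrans_natural
    {V : Type*} [Category V] [MonoidalCategory V] [BraidedCategory V]
    {C D : Type*} [EnrichedCategory V C] [EnrichedCategory V D]
    {M : VMonStruct V C} {N : VMonStruct V D}
    (R : VLaxMonFunctor M N) (FA : FreeModule M) (FB : FreeModule N)
    {u v : V} (f : u ⟶ v) :
    compU (FB.Fmap f) (rtrans R FA FB v) =
      compU (rtrans R FA FB u) (FA.Fmap f ≫ R.map (FA.F u) (FA.F v)) := by
  rw [rtrans_eq, rtrans_eq, ← compU_assoc, compU_eqU_unit_tensor_symm, compU_assoc,
    ← FB.adj_symm_comp, rtransMate_natural, FB.adj_symm_comp_postU, compU_assoc]
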